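/- For the laziest minimal random walk with parameter p ∈ (0,1), the probability generating functions f_n(x) := E[x^{H_n}] satisfy the recursion f_{n+1}(x) = (p x (x-1)/n) · f_n'(x) + f_n(x) for all n ≥ 1 and all real x. -/

import Mathlib

open MeasureTheory ProbabilityTheory Filter Real

def lazyH {Ω : Type*} (X : ℕ → Ω → ℕ) (n : ℕ) (ω : Ω) : ℕ :=
  ∑ i ∈ Finset.Icc 1 n, X i ω

/-- Probability generating function of the position `H n`. -/
noncomputable def lazyPGF {Ω : Type*} [MeasurableSpace Ω] (μ : MeasureTheory.Measure Ω)
    (X : ℕ → Ω → ℕ) (n : ℕ) (x : ℝ) : ℝ :=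
  ∫ ω, x ^ (lazyH X n ω) ∂μ

/-!
Since `X (n + 1)` takes only the values `0` and `1`,
`x ^ H (n + 1) = x ^ H n + (x - 1) * x ^ H n * X (n + 1)`. Pulling the `ℱ n`-measurable factor
`x ^ H n` out of the conditional expectation replaces `X (n + 1)` by `p * H n / n`, and
`E[H n * x ^ H n] = x * f_n'(x)` because `f_n(x) = ∑ₖ P(H n = k) xᵏ` is a polynomial.
-/

section BoundedNatValued

variable {Ω : Type*} {f : Ω → ℕ} {N : ℕ}

lemma comp_eq_sum_indicator (hle : ∀ ω, f ω ≤ N) (φ : ℕ → ℝ) :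
    (fun ω => φ (f ω)) =
      fun ω => ∑ k ∈ Finset.range (N + 1), (f ⁻¹' {k}).indicator (fun _ => φ k) ω := by
  funext ω
  rw [Finset.sum_eq_single_of_mem (f ω) (Finset.mem_range_succ_iff.2 (hle ω))]
  · simp
  · intro k _ hk
    exact Set.indicator_of_notMem (Ne.symm hk) _

variable [MeasurableSpace Ω] {μ : Measure Ω} [IsFiniteMeasure μ]

lemma integrable_comp_of_le (hf : Measurable f) (hle : ∀ ω, f ω ≤ N) (φ : ℕ → ℝ) :
    Integrable (fun ω => φ (f ω)) μ := by
  rw [comp_eq_sum_indicator hle φ]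
  exact integrable_finsetSum _ fun k _ =>
    (integrable_const (φ k)).indicator (hf (measurableSet_singleton k))

lemma integral_comp_eq_sum (hf : Measurable f) (hle : ∀ ω, f ω ≤ N) (φ : ℕ → ℝ) :
    ∫ ω, φ (f ω) ∂μ = ∑ k ∈ Finset.range (N + 1), μ.real (f ⁻¹' {k}) * φ k := by
  rw [comp_eq_sum_indicator hle φ, integral_finsetSum _ fun k _ =>
    (integrable_const (φ k)).indicator (hf (measurableSet_singleton k))]
  refine Finset.sum_congr rfl fun k _ => ?_
  rw [integral_indicator_const (φ k) (hf (measurableSet_singleton k)), smul_eq_mul]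

lemma integrable_comp_mul_of_le_one (hf : Measurable f) (hle : ∀ ω, f ω ≤ N) (φ : ℕ → ℝ)
    {g : Ω → ℕ} (hg : Measurable g) (hg1 : ∀ ω, g ω ≤ 1) :
    Integrable (fun ω => φ (f ω) * g ω) μ :=
  (integrable_comp_of_le hf hle φ).mul_bdd (c := 1)
    (measurable_from_top.comp hg).aestronglyMeasurable
    (ae_of_all _ fun ω => by simpa using hg1 ω)

lemma hasDerivAt_integral_pow (hf : Measurable f) (hle : ∀ ω, f ω ≤ N) (x : ℝ) :
    HasDerivAt (fun y : ℝ => ∫ ω, y ^ f ω ∂μ) (∫ ω, f ω * x ^ (f ω - 1) ∂μ) x := by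
  simp_rw [integral_comp_eq_sum hf hle]
  rw [integral_comp_eq_sum hf hle fun k => (k : ℝ) * x ^ (k - 1)]
  exact HasDerivAt.fun_sum fun k _ => (hasDerivAt_pow k x).const_mul _

lemma mul_deriv_integral_pow (hf : Measurable f) (hle : ∀ ω, f ω ≤ N) (x : ℝ) :
    x * deriv (fun y : ℝ => ∫ ω, y ^ f ω ∂μ) x = ∫ ω, f ω * x ^ f ω ∂μ := by
  rw [(hasDerivAt_integral_pow hf hle x).deriv, ← integral_const_mul]
  congr 1 with ω
  rcases f ω with _ | k
  · simp
  · simp only [Nat.add_sub_cancel, pow_succ]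
    ring

end BoundedNatValued

lemma pow_add_of_le_one (x : ℝ) (a : ℕ) {b : ℕ} (hb : b ≤ 1) :
    x ^ (a + b) = x ^ a + (x - 1) * (x ^ a * b) := by
  rcases Nat.le_one_iff_eq_zero_or_eq_one.mp hb with rfl | rfl
  · simp
  · rw [pow_succ]
    push_cast
    ring

lemma integral_mul_eq_integral_mul_condExp {Ω : Type*} {m m0 : MeasurableSpace Ω}
    {μ : Measure Ω} (hm : m ≤ m0) [SigmaFinite (μ.trim hm)] {g Y : Ω → ℝ}
    (hg : StronglyMeasurable[m] g) (hgY : Integrable (fun ω => g ω * Y ω) μ)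
    (hY : Integrable Y μ) :
    ∫ ω, g ω * Y ω ∂μ = ∫ ω, g ω * μ[Y | m] ω ∂μ := by
  rw [← integral_condExp hm]
  exact integral_congr_ae (condExp_mul_of_stronglyMeasurable_left hg hgY hY)

section LazyWalk

variable {Ω : Type*} {X : ℕ → Ω → ℕ}

lemma lazyH_succ (n : ℕ) (ω : Ω) : lazyH X (n + 1) ω = lazyH X n ω + X (n + 1) ω :=
  Finset.sum_Icc_succ_top (Nat.le_add_left 1 n) _

lemma lazyH_le (hX : ∀ n ω, X n ω ≤ 1) (n : ℕ) (ω : Ω) : lazyH X n ω ≤ n :=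
  calc lazyH X n ω ≤ ∑ _ ∈ Finset.Icc 1 n, 1 := Finset.sum_le_sum fun i _ => hX i ω
    _ = n := by simp

lemma measurable_lazyH {m0 : MeasurableSpace Ω} (ℱ : Filtration ℕ m0)
    (hadp : ∀ n, Measurable[ℱ n] (X n)) (n : ℕ) : Measurable[ℱ n] (lazyH X n) :=
  Finset.measurable_sum _ fun i hi => (hadp i).mono (ℱ.mono (Finset.mem_Icc.1 hi).2) le_rfl

end LazyWalk

theorem stmt6_general {Ω : Type*} {m0 : MeasurableSpace Ω} (μ : Measure Ω) [IsProbabilityMeasure μ]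
    (ℱ : Filtration ℕ m0) (p : ℝ)
    (X : ℕ → Ω → ℕ)
    (hXval : ∀ n ω, X n ω ≤ 1)
    (hadp : ∀ n, Measurable[ℱ n] (X n))
    (hcond : ∀ n : ℕ, 1 ≤ n →
      μ[(fun ω => (X (n + 1) ω : ℝ)) | ℱ n] =ᵐ[μ]
        fun ω => p * (lazyH X n ω : ℝ) / n) :
    ∀ n : ℕ, 1 ≤ n → ∀ x : ℝ,
      lazyPGF μ X (n + 1) x =
        (p * x * (x - 1) / n) * deriv (lazyPGF μ X n) x + lazyPGF μ X n x := by
  intro n hn x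
  set H := lazyH X n
  have hHF : Measurable[ℱ n] H := measurable_lazyH ℱ hadp n
  have hH : Measurable H := hHF.mono (ℱ.le n) le_rfl
  have hHle : ∀ ω, H ω ≤ n := lazyH_le hXval n
  have hX : Measurable (X (n + 1)) := (hadp (n + 1)).mono (ℱ.le (n + 1)) le_rfl
  have hint := integrable_comp_mul_of_le_one (μ := μ) hH hHle (x ^ ·) hX (hXval (n + 1))
  have hsplit : lazyPGF μ X (n + 1) x =
      lazyPGF μ X n x + (x - 1) * ∫ ω, x ^ H ω * X (n + 1) ω ∂μ := by
    simp_rw [lazyPGF, lazyH_succ, pow_add_of_le_one x _ (hXval (n + 1) _)]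
    rw [integral_add (integrable_comp_of_le hH hHle _) (hint.const_mul _), integral_const_mul]
  have hcross : ∫ ω, x ^ H ω * X (n + 1) ω ∂μ = p / n * ∫ ω, H ω * x ^ H ω ∂μ := by
    rw [integral_mul_eq_integral_mul_condExp (ℱ.le n) (g := fun ω => x ^ H ω)
        (measurable_from_top.comp hHF).stronglyMeasurable hint
        (integrable_comp_of_le hX (hXval (n + 1)) _),
      integral_congr_ae ((hcond n hn).mono fun ω hω => by rw [hω]), ← integral_const_mul]
    congr 1 with ω
    ring
  rw [hsplit, hcross, ← mul_deriv_integral_pow hH hHle]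
  unfold lazyPGF
  ring

theorem stmt6 {Ω : Type*} {m0 : MeasurableSpace Ω} (μ : Measure Ω) [IsProbabilityMeasure μ]
    (ℱ : Filtration ℕ m0) (p : ℝ) (hp : 0 < p) (hp1 : p < 1)
    (X : ℕ → Ω → ℕ)
    (hXval : ∀ n ω, X n ω ≤ 1)
    (hX1 : ∀ᵐ ω ∂μ, X 1 ω = 1)
    (hadp : ∀ n, Measurable[ℱ n] (X n))
    (hcond : ∀ n : ℕ, 1 ≤ n →
      μ[(fun ω => (X (n + 1) ω : ℝ)) | ℱ n] =ᵐ[μ]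
        fun ω => p * (lazyH X n ω : ℝ) / n) :
    ∀ n : ℕ, 1 ≤ n → ∀ x : ℝ,
      lazyPGF μ X (n + 1) x =
        (p * x * (x - 1) / n) * deriv (lazyPGF μ X n) x + lazyPGF μ X n x :=
  stmt6_general μ ℱ p X hXval hadp hcond
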